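/- arXiv:2205.10888 — 2 statements merged into one kernel-verified Lean document; each statement's English description precedes it below -/
import Mathlib

section
/- Let Z be a topological space, (Xₙ)_{n∈ℕ} a sequence of topological spaces with continuous structure maps πₙ : Xₙ₊₁ → Xₙ, and fₙ : Xₙ → Z continuous maps compatible with the inverse system, i.e. fₙ ∘ πₙ = fₙ₊₁ for all n. Suppose each fₙ is a Serre fibration and each structure map πₙ is a Serre fibration. Let X = {x ∈ Π_n Xₙ : πₙ(x_{n+1}) = xₙ for all n} be the inverse limit with the subspace topology of the product, and let f : X → Z be the induced map f(x) = f₀(x₀). Then f is a Serre fibration. -/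
/-!
The induced map is `f₀` composed with the projection of the limit onto `X₀`, and a composite of
Serre fibrations is one. The projection is a Serre fibration because a homotopy in `X₀` whose
start lifts to the limit can be lifted through `π₀`, then the result through `π₁`, and so on; the
resulting tower of homotopies is a homotopy into the limit, since the limit carries the subspace
topology of the product.
-/

open unitInterval

/-- A map `p : E → B` of topological spaces is a Serre fibration if it is continuous and has the
homotopy lifting property with respect to all cubes `[0,1]ⁿ`. -/
def IsSerreFibration {E B : Type*} [TopologicalSpace E] [TopologicalSpace B]
    (p : E → B) : Prop :=
  Continuous p ∧
    ∀ (n : ℕ) (H : C((Fin n → unitInterval) × unitInterval, B))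
      (h₀ : C((Fin n → unitInterval), E)),
      (∀ x, p (h₀ x) = H (x, 0)) →
      ∃ H' : C((Fin n → unitInterval) × unitInterval, E),
        (∀ x, H' (x, 0) = h₀ x) ∧ ∀ z, p (H' z) = H z

theorem IsSerreFibration.comp {E B C : Type*} [TopologicalSpace E] [TopologicalSpace B]
    [TopologicalSpace C] {q : B → C} {p : E → B} (hq : IsSerreFibration q)
    (hp : IsSerreFibration p) : IsSerreFibration (q ∘ p) := by
  refine ⟨hq.1.comp hp.1, fun n H h₀ hh₀ => ?_⟩
  obtain ⟨G, hG₀, hqG⟩ := hq.2 n H ⟨p ∘ h₀, hp.1.comp h₀.continuous⟩ hh₀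
  obtain ⟨H', hH'₀, hpH'⟩ := hp.2 n G h₀ fun x => (hG₀ x).symm
  exact ⟨H', hH'₀, fun z => by simp only [Function.comp_apply, hpH', hqG]⟩

section InverseLimit

variable {X : ℕ → Type*} [∀ n, TopologicalSpace (X n)]

abbrev SeqInverseLimit (π : ∀ n, C(X (n + 1), X n)) : Type _ :=
  {x : ∀ n, X n // ∀ n, π n (x (n + 1)) = x n}

variable {π : ∀ n, C(X (n + 1), X n)}

theorem SeqInverseLimit.continuous_eval (m : ℕ) :
    Continuous fun x : SeqInverseLimit π => x.1 m :=
  (continuous_apply m).comp continuous_subtype_val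

theorem exists_homotopy_tower (hπ : ∀ m, IsSerreFibration (π m)) {n : ℕ}
    (H : C((Fin n → I) × I, X 0)) (h₀ : C(Fin n → I, SeqInverseLimit π))
    (hh₀ : ∀ x, (h₀ x).1 0 = H (x, 0)) :
    ∃ G : ∀ m, {G : C((Fin n → I) × I, X m) // ∀ x, G (x, 0) = (h₀ x).1 m},
      (G 0).1 = H ∧ ∀ m z, π m ((G (m + 1)).1 z) = (G m).1 z := by
  have step : ∀ m (G : {G : C((Fin n → I) × I, X m) // ∀ x, G (x, 0) = (h₀ x).1 m}),
      ∃ G' : {G : C((Fin n → I) × I, X (m + 1)) // ∀ x, G (x, 0) = (h₀ x).1 (m + 1)},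
        ∀ z, π m (G'.1 z) = G.1 z := by
    intro m G
    obtain ⟨G', hG'₀, hπG'⟩ := (hπ m).2 n G.1
      ⟨fun x => (h₀ x).1 (m + 1), (SeqInverseLimit.continuous_eval _).comp h₀.continuous⟩
      fun x => by simp only [ContinuousMap.coe_mk, (h₀ x).2 m, G.2 x]
    exact ⟨⟨G', hG'₀⟩, hπG'⟩
  choose lift hlift using step
  let G : ∀ m, {G : C((Fin n → I) × I, X m) // ∀ x, G (x, 0) = (h₀ x).1 m} :=
    fun m => Nat.rec ⟨H, fun x => (hh₀ x).symm⟩ lift m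
  exact ⟨G, rfl, fun m => hlift m (G m)⟩

theorem isSerreFibration_seqInverseLimit_eval_zero (hπ : ∀ m, IsSerreFibration (π m)) :
    IsSerreFibration fun x : SeqInverseLimit π => x.1 0 := by
  refine ⟨SeqInverseLimit.continuous_eval 0, fun n H h₀ hh₀ => ?_⟩
  obtain ⟨G, hG0, hπG⟩ := exists_homotopy_tower hπ H h₀ hh₀
  refine ⟨⟨fun z => ⟨fun m => (G m).1 z, fun m => hπG m z⟩,
    (continuous_pi fun m => (G m).1.continuous).subtype_mk _⟩, fun x => ?_, fun z => ?_⟩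
  · exact Subtype.ext (funext fun m => (G m).2 x)
  · simp only [ContinuousMap.coe_mk, hG0]

end InverseLimit

theorem isSerreFibration_inverseLimit_general
    {Z : Type*} [TopologicalSpace Z]
    {X : ℕ → Type*} [∀ n, TopologicalSpace (X n)]
    (π : ∀ n, C(X (n + 1), X n)) (f : ∀ n, C(X n, Z))
    (hf : ∀ n, IsSerreFibration (f n))
    (hπ : ∀ n, IsSerreFibration (π n)) :
    IsSerreFibration
      (fun x : {x : ∀ n, X n // ∀ n, π n (x (n + 1)) = x n} => f 0 (x.1 0)) :=
  (hf 0).comp (isSerreFibration_seqInverseLimit_eval_zero hπ)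

/-- **Lemma 4.24(1)** (topological form, sequential inverse systems).  Given an inverse system
of spaces `Xₙ` with continuous structure maps `πₙ : Xₙ₊₁ → Xₙ`, and compatible continuous maps
`fₙ : Xₙ → Z` such that every `fₙ` and every `πₙ` is a Serre fibration, the induced map from the
inverse limit `X = lim Xₙ` to `Z` is a Serre fibration. -/
theorem isSerreFibration_inverseLimit
    {Z : Type*} [TopologicalSpace Z]
    {X : ℕ → Type*} [∀ n, TopologicalSpace (X n)]
    (π : ∀ n, C(X (n + 1), X n)) (f : ∀ n, C(X n, Z))
    (hcompat : ∀ (n : ℕ) (x : X (n + 1)), f n (π n x) = f (n + 1) x)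
    (hf : ∀ n, IsSerreFibration (f n))
    (hπ : ∀ n, IsSerreFibration (π n)) :
    IsSerreFibration
      (fun x : {x : ∀ n, X n // ∀ n, π n (x (n + 1)) = x n} => f 0 (x.1 0)) :=
  isSerreFibration_inverseLimit_general π f hf hπ
end

section
/- Let A be a topological space, B ⊆ A a closed subset, and F a sheaf of sets on A. Let F(B) denote the direct limit, over the family of open sets U with B ⊆ U (directed under reverse inclusion), of the sets F(U) with the restriction maps; and let F(Op(B)∖B) denote the direct limit over the same family of the sets F(U∖B) with the restriction maps. Consider the canonical maps F(A) → F(B) and F(B) → F(Op(B)∖B) induced by restriction, and the maps F(A) → F(A∖B) and F(A∖B) → F(Op(B)∖B) given by restriction of sections; these form a commutative square. Then the induced map F(A) → F(A∖B) ×_{F(Op(B)∖B)} F(B) into the fibered product of sets is a bijection: a global section of F is precisely the same data as a section over A∖B together with a germ of a section along B that agree on a deleted germinal neighborhood of B. -/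
/-!
The sets `A ∖ B` and any open `U ⊇ B` cover `A`, so by the sheaf axiom a global section is the same
as a pair of sections on them agreeing on `U ∖ B`. Equality in either colimit is witnessed on a
single neighbourhood (neighbourhoods of `B` are closed under intersection), so such a pair, up to
shrinking `U`, is exactly a point of `F(A ∖ B) ×_{F(Op(B) ∖ B)} F(B)`.
-/

open CategoryTheory TopologicalSpace Opposite

universe u v

/-- Indexing set for germinal sections along a subset `B`: open sets containing `B`. -/
def NbhdIdx {A : Type u} [TopologicalSpace A] (B : Set A) : Type u :=
  {U : Opens A // B ⊆ ↑U}

/-- The relation identifying two sections, defined on open neighborhoods of `B`, when they agree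
after restriction to a common smaller open neighborhood of `B`. -/
def GermRel {A : Type u} [TopologicalSpace A] (F : (Opens A)ᵒᵖ ⥤ Type v) (B : Set A) :
    (Σ U : NbhdIdx B, F.obj (op U.1)) → (Σ U : NbhdIdx B, F.obj (op U.1)) → Prop :=
  fun a b =>
    ∃ (W : NbhdIdx B) (h₁ : W.1 ≤ a.1.1) (h₂ : W.1 ≤ b.1.1),
      F.map (homOfLE h₁).op a.2 = F.map (homOfLE h₂).op b.2

/-- `F(B)`: the direct limit, over open sets `U ⊇ B`, of the sections `F(U)` under
restriction. -/
def Germs {A : Type u} [TopologicalSpace A] (F : (Opens A)ᵒᵖ ⥤ Type v) (B : Set A) :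
    Type (max u v) :=
  Quot (GermRel F B)

variable {A : Type u} [TopologicalSpace A]

/-- For `B` closed and `U` open, the open set `U ∖ B`. -/
def delOpen (B : Set A) (hB : IsClosed B) (U : Opens A) : Opens A :=
  U ⊓ ⟨Bᶜ, hB.isOpen_compl⟩

/-- The relation identifying two sections defined on deleted neighborhoods `U ∖ B` of `B`, when
they agree after restriction to a common smaller deleted neighborhood `W ∖ B`. -/
def DelGermRel (F : (Opens A)ᵒᵖ ⥤ Type v) (B : Set A) (hB : IsClosed B) :
    (Σ U : NbhdIdx B, F.obj (op (delOpen B hB U.1))) →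
      (Σ U : NbhdIdx B, F.obj (op (delOpen B hB U.1))) → Prop :=
  fun a b =>
    ∃ (W : NbhdIdx B) (h₁ : W.1 ≤ a.1.1) (h₂ : W.1 ≤ b.1.1),
      F.map (homOfLE (inf_le_inf_right _ h₁ : delOpen B hB W.1 ≤ delOpen B hB a.1.1)).op a.2
        = F.map (homOfLE (inf_le_inf_right _ h₂ : delOpen B hB W.1 ≤ delOpen B hB b.1.1)).op b.2

/-- `F(Op(B) ∖ B)`: sections on a deleted germinal neighborhood of `B`, i.e. the direct limit
over open sets `U ⊇ B` of the sections `F(U ∖ B)` under restriction. -/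
def DelGerms (F : (Opens A)ᵒᵖ ⥤ Type v) (B : Set A) (hB : IsClosed B) : Type (max u v) :=
  Quot (DelGermRel F B hB)

/-- The canonical restriction map `F(B) → F(Op(B) ∖ B)`. -/
def germsToDelGerms (F : (Opens A)ᵒᵖ ⥤ Type v) (B : Set A) (hB : IsClosed B) :
    Germs F B → DelGerms F B hB :=
  Quot.lift
    (fun a => Quot.mk (DelGermRel F B hB)
      ⟨a.1, F.map (homOfLE (inf_le_left : delOpen B hB a.1.1 ≤ a.1.1)).op a.2⟩)
    (by
      rintro ⟨U, s⟩ ⟨V, t⟩ ⟨W, h₁, h₂, hst⟩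
      apply Quot.sound
      refine ⟨W, h₁, h₂, ?_⟩
      show F.map (homOfLE (inf_le_inf_right _ h₁)).op
            (F.map (homOfLE (inf_le_left : delOpen B hB U.1 ≤ U.1)).op s)
          = F.map (homOfLE (inf_le_inf_right _ h₂)).op
            (F.map (homOfLE (inf_le_left : delOpen B hB V.1 ≤ V.1)).op t)
      rw [← FunctorToTypes.map_comp_apply, ← FunctorToTypes.map_comp_apply]
      have e₁ : ((homOfLE (inf_le_left : delOpen B hB U.1 ≤ U.1)).op ≫
            (homOfLE (inf_le_inf_right _ h₁)).op : op U.1 ⟶ op (delOpen B hB W.1))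
          = (homOfLE h₁).op ≫ (homOfLE (inf_le_left : delOpen B hB W.1 ≤ W.1)).op := rfl
      have e₂ : ((homOfLE (inf_le_left : delOpen B hB V.1 ≤ V.1)).op ≫
            (homOfLE (inf_le_inf_right _ h₂)).op : op V.1 ⟶ op (delOpen B hB W.1))
          = (homOfLE h₂).op ≫ (homOfLE (inf_le_left : delOpen B hB W.1 ≤ W.1)).op := rfl
      have key := congrArg
        (fun z => F.map (homOfLE (inf_le_left : delOpen B hB W.1 ≤ W.1)).op z) hst
      rw [← FunctorToTypes.map_comp_apply, ← FunctorToTypes.map_comp_apply] at key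
      exact key)

/-- The canonical map `F(A ∖ B) → F(Op(B) ∖ B)` restricting a section defined on all of
`A ∖ B` to a deleted germinal neighborhood of `B`. -/
def sectionToDelGerms (F : (Opens A)ᵒᵖ ⥤ Type v) (B : Set A) (hB : IsClosed B) :
    F.obj (op (⟨Bᶜ, hB.isOpen_compl⟩ : Opens A)) → DelGerms F B hB :=
  fun u => Quot.mk (DelGermRel F B hB)
    ⟨⟨⊤, by simp⟩,
      F.map (homOfLE (inf_le_right :
        delOpen B hB ⊤ ≤ (⟨Bᶜ, hB.isOpen_compl⟩ : Opens A))).op u⟩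

/-- The canonical map `F(A) → F(B)` sending a global section to its germ along `B`. -/
def germAlong (F : (Opens A)ᵒᵖ ⥤ Type v) (B : Set A) :
    F.obj (op (⊤ : Opens A)) → Germs F B :=
  fun s => Quot.mk (GermRel F B) ⟨⟨⊤, by simp⟩, s⟩

/-- The restriction map `F(A) → F(A ∖ B)`. -/
def restrictAwayFrom (F : (Opens A)ᵒᵖ ⥤ Type v) (B : Set A) (hB : IsClosed B) :
    F.obj (op (⊤ : Opens A)) → F.obj (op (⟨Bᶜ, hB.isOpen_compl⟩ : Opens A)) :=
  F.map (homOfLE le_top).op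

section Thin

variable {C : Type*} [Category C] [Quiver.IsThin C] (F : C ⥤ Type v)

lemma map_eq_map_of_isThin {X Y : C} (f g : X ⟶ Y) (x : F.obj X) : F.map f x = F.map g x := by
  rw [Subsingleton.elim f g]

lemma map_map_eq_map_of_isThin {X Y Z : C} (f : X ⟶ Y) (g : Y ⟶ Z) (h : X ⟶ Z) (x : F.obj X) :
    F.map g (F.map f x) = F.map h x := by
  rw [← Functor.map_comp_apply, Subsingleton.elim (f ≫ g) h]

lemma map_map_eq_self_of_isThin {X Y : C} (f : X ⟶ Y) (g : Y ⟶ X) (x : F.obj X) :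
    F.map g (F.map f x) = x := by
  rw [map_map_eq_map_of_isThin F f g (𝟙 X), Functor.map_id_apply]

lemma map_eq_map_of_map_eq_map {X Y Z Z' : C} {f : X ⟶ Z} {g : Y ⟶ Z} {x : F.obj X}
    {y : F.obj Y} (h : F.map f x = F.map g y) (k : Z ⟶ Z') (f' : X ⟶ Z') (g' : Y ⟶ Z') :
    F.map f' x = F.map g' y := by
  rw [← map_map_eq_map_of_isThin F f k f', h, map_map_eq_map_of_isThin]

end Thin

section Germs

variable (F : (Opens A)ᵒᵖ ⥤ Type v) (B : Set A)

lemma germRel_equivalence : Equivalence (GermRel F B) where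
  refl a := ⟨a.1, le_rfl, le_rfl, rfl⟩
  symm := fun ⟨W, h₁, h₂, e⟩ => ⟨W, h₂, h₁, e.symm⟩
  trans := fun ⟨W₁, h₁, h₂, e₁⟩ ⟨W₂, _, k₂, e₂⟩ =>
    ⟨⟨W₁.1 ⊓ W₂.1, Set.subset_inter W₁.2 W₂.2⟩, inf_le_left.trans h₁, inf_le_right.trans k₂,
      (map_eq_map_of_map_eq_map F e₁ (homOfLE inf_le_left).op _
          (homOfLE (inf_le_left.trans h₂)).op).trans
        (map_eq_map_of_map_eq_map F e₂ (homOfLE inf_le_right).op _ _)⟩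

/-- `DelGermRel F B hB` is definitionally `GermRel` of `F` precomposed with `U ↦ U ∖ B`. -/
def delOpenFunctor (hB : IsClosed B) : Opens A ⥤ Opens A :=
  Monotone.functor (fun _ _ h => inf_le_inf_right _ h : Monotone (delOpen B hB))

lemma delGermRel_equivalence (hB : IsClosed B) : Equivalence (DelGermRel F B hB) :=
  germRel_equivalence ((delOpenFunctor B hB).op ⋙ F) B

end Germs

def GluingCondition (F : (Opens A)ᵒᵖ ⥤ Type v) : Prop :=
  ∀ {ι : Type u} (W : ι → Opens A) (sec : ∀ i, F.obj (op (W i))),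
    (∀ i j, F.map (homOfLE (inf_le_left : W i ⊓ W j ≤ W i)).op (sec i)
          = F.map (homOfLE (inf_le_right : W i ⊓ W j ≤ W j)).op (sec j)) →
    ∃! t : F.obj (op (iSup W)), ∀ i, F.map (homOfLE (le_iSup W i)).op t = sec i

def pairFamily (U V : Opens A) : ULift.{u} Bool → Opens A
  | ⟨true⟩ => U
  | ⟨false⟩ => V

lemma le_iSup_pairFamily {U V X : Opens A} (hX : X ≤ U ⊔ V) : X ≤ iSup (pairFamily U V) :=
  hX.trans (sup_le (le_iSup (pairFamily U V) ⟨true⟩) (le_iSup (pairFamily U V) ⟨false⟩))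

lemma pairFamily_le {U V X : Opens A} (hU : U ≤ X) (hV : V ≤ X) : ∀ i, pairFamily U V i ≤ X
  | ⟨true⟩ => hU
  | ⟨false⟩ => hV

namespace GluingCondition

variable {F : (Opens A)ᵒᵖ ⥤ Type v} (hF : GluingCondition F)
  {ι : Type u} {W : ι → Opens A} {X : Opens A}
include hF

lemma eq_of_forall_map_eq (hX : X ≤ iSup W) (hWX : ∀ i, W i ≤ X) {s t : F.obj (op X)}
    (h : ∀ i, F.map (homOfLE (hWX i)).op s = F.map (homOfLE (hWX i)).op t) : s = t := by
  obtain ⟨g, -, huniq⟩ := hF W (fun i => F.map (homOfLE (hWX i)).op s)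
    (fun i j => (map_map_eq_map_of_isThin F _ _ (homOfLE (inf_le_left.trans (hWX i))).op s).trans
      (map_map_eq_map_of_isThin F _ _ _ s).symm)
  have hs : F.map (homOfLE (iSup_le hWX)).op s = g :=
    huniq _ fun i => map_map_eq_map_of_isThin F _ _ _ s
  have ht : F.map (homOfLE (iSup_le hWX)).op t = g :=
    huniq _ fun i => (map_map_eq_map_of_isThin F _ _ _ t).trans (h i).symm
  calc s = F.map (homOfLE hX).op (F.map (homOfLE (iSup_le hWX)).op s) :=
        (map_map_eq_self_of_isThin F _ _ s).symm
    _ = F.map (homOfLE hX).op (F.map (homOfLE (iSup_le hWX)).op t) := by rw [hs, ht]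
    _ = t := map_map_eq_self_of_isThin F _ _ t

lemma exists_forall_map_eq (hX : X ≤ iSup W) (hWX : ∀ i, W i ≤ X)
    (sec : ∀ i, F.obj (op (W i)))
    (hsec : ∀ i j, F.map (homOfLE (inf_le_left : W i ⊓ W j ≤ W i)).op (sec i)
          = F.map (homOfLE (inf_le_right : W i ⊓ W j ≤ W j)).op (sec j)) :
    ∃ s : F.obj (op X), ∀ i, F.map (homOfLE (hWX i)).op s = sec i := by
  obtain ⟨g, hg, -⟩ := hF W sec hsec
  exact ⟨F.map (homOfLE hX).op g, fun i => (map_map_eq_map_of_isThin F _ _ _ g).trans (hg i)⟩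

variable {U V : Opens A} (hX : X ≤ U ⊔ V) (hU : U ≤ X) (hV : V ≤ X)
include hX

lemma eq_of_map_eq_of_le_sup {s t : F.obj (op X)}
    (hsU : F.map (homOfLE hU).op s = F.map (homOfLE hU).op t)
    (hsV : F.map (homOfLE hV).op s = F.map (homOfLE hV).op t) : s = t :=
  hF.eq_of_forall_map_eq (le_iSup_pairFamily hX) (pairFamily_le hU hV) fun
    | ⟨true⟩ => hsU
    | ⟨false⟩ => hsV

lemma exists_map_eq_of_le_sup (s : F.obj (op U)) (t : F.obj (op V))
    (hst : F.map (homOfLE (inf_le_left : U ⊓ V ≤ U)).op s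
      = F.map (homOfLE (inf_le_right : U ⊓ V ≤ V)).op t) :
    ∃ g : F.obj (op X), F.map (homOfLE hU).op g = s ∧ F.map (homOfLE hV).op g = t := by
  let sec : ∀ i, F.obj (op (pairFamily U V i))
    | ⟨true⟩ => s
    | ⟨false⟩ => t
  obtain ⟨g, hg⟩ := hF.exists_forall_map_eq (le_iSup_pairFamily hX) (pairFamily_le hU hV) sec (by
    rintro ⟨_ | _⟩ ⟨_ | _⟩
    · exact map_eq_map_of_isThin F _ _ t
    · exact map_eq_map_of_map_eq_map F hst.symm (homOfLE (inf_comm V U).le).op _ _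
    · exact hst
    · exact map_eq_map_of_isThin F _ _ s)
  exact ⟨g, hg ⟨true⟩, hg ⟨false⟩⟩

end GluingCondition

section Restriction

variable {F : (Opens A)ᵒᵖ ⥤ Type v} {B : Set A} (hB : IsClosed B)

lemma le_sup_compl_of_subset {W : Opens A} (hW : B ⊆ W) :
    (⊤ : Opens A) ≤ W ⊔ ⟨Bᶜ, hB.isOpen_compl⟩ := by
  intro x _
  by_cases hx : x ∈ B
  exacts [Or.inl (hW hx), Or.inr hx]

lemma sectionToDelGerms_restrictAwayFrom (s : F.obj (op (⊤ : Opens A))) :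
    sectionToDelGerms F B hB (restrictAwayFrom F B hB s)
      = germsToDelGerms F B hB (germAlong F B s) :=
  Quot.sound ⟨⟨⊤, Set.subset_univ B⟩, le_rfl, le_rfl, by
    simp only [restrictAwayFrom, ← Functor.map_comp_apply]
    exact map_eq_map_of_isThin F _ _ s⟩

lemma injective_restrictAwayFrom_prod_germAlong (hF : GluingCondition F) :
    Function.Injective
      (fun s : F.obj (op (⊤ : Opens A)) => (restrictAwayFrom F B hB s, germAlong F B s)) := by
  intro s t hst
  obtain ⟨hcompl, hgerm⟩ := Prod.mk.inj hst
  obtain ⟨W, _, _, hW⟩ := (Quot.eq.trans (germRel_equivalence F B).eqvGen_iff).mp hgerm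
  exact hF.eq_of_map_eq_of_le_sup (le_sup_compl_of_subset hB W.2) le_top le_top hW hcompl

lemma exists_restrictAwayFrom_eq_germAlong_eq (hF : GluingCondition F)
    (u : F.obj (op (⟨Bᶜ, hB.isOpen_compl⟩ : Opens A))) (v : Germs F B)
    (huv : sectionToDelGerms F B hB u = germsToDelGerms F B hB v) :
    ∃ s : F.obj (op (⊤ : Opens A)), restrictAwayFrom F B hB s = u ∧ germAlong F B s = v := by
  obtain ⟨⟨U, t⟩, rfl⟩ := Quot.exists_rep v
  obtain ⟨W, _, hWU, hut⟩ := (Quot.eq.trans (delGermRel_equivalence F B hB).eqvGen_iff).mp huv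
  have hcompat : F.map (homOfLE inf_le_left).op (F.map (homOfLE hWU).op t)
      = F.map (homOfLE (inf_le_right : delOpen B hB W.1 ≤ ⟨Bᶜ, hB.isOpen_compl⟩)).op u := by
    simp only [← Functor.map_comp_apply] at hut ⊢
    exact (map_eq_map_of_isThin F _ _ t).trans (hut.symm.trans (map_eq_map_of_isThin F _ _ u))
  obtain ⟨s, hsW, hsu⟩ := hF.exists_map_eq_of_le_sup (le_sup_compl_of_subset hB W.2) le_top le_top
    (F.map (homOfLE hWU).op t) u hcompat
  exact ⟨s, hsu, Quot.sound ⟨W, le_top, hWU, hsW⟩⟩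

end Restriction

/-- **Lemma 4.22** (set-theoretic content).  Let `A` be a topological space, `B ⊆ A` closed, and
`F` a sheaf of sets on `A`.  The restriction maps `F(A) → F(B)`, `F(B) → F(Op(B)∖B)`,
`F(A) → F(A∖B)`, `F(A∖B) → F(Op(B)∖B)` form a commutative square, and the induced map
`F(A) → F(A∖B) ×_{F(Op(B)∖B)} F(B)` into the fibered product is a bijection: a global section of
`F` is precisely a section over `A∖B` together with a germ of a section along `B` agreeing on a
deleted germinal neighborhood of `B`. -/
theorem sections_bijective_fiberedProduct_of_closed
    (B : Set A) (hB : IsClosed B) (F : (Opens A)ᵒᵖ ⥤ Type v)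
    (hsheaf : ∀ {ι : Type u} (W : ι → Opens A) (sec : ∀ i, F.obj (op (W i))),
      (∀ i j, F.map (homOfLE (inf_le_left : W i ⊓ W j ≤ W i)).op (sec i)
            = F.map (homOfLE (inf_le_right : W i ⊓ W j ≤ W j)).op (sec j)) →
      ∃! t : F.obj (op (iSup W)), ∀ i, F.map (homOfLE (le_iSup W i)).op t = sec i) :
    (∀ s : F.obj (op (⊤ : Opens A)),
        sectionToDelGerms F B hB (restrictAwayFrom F B hB s)
          = germsToDelGerms F B hB (germAlong F B s)) ∧
    Function.Injective
      (fun s : F.obj (op (⊤ : Opens A)) =>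
        (restrictAwayFrom F B hB s, germAlong F B s)) ∧
    (∀ (u : F.obj (op (⟨Bᶜ, hB.isOpen_compl⟩ : Opens A))) (v : Germs F B),
        sectionToDelGerms F B hB u = germsToDelGerms F B hB v →
        ∃ s : F.obj (op (⊤ : Opens A)),
          restrictAwayFrom F B hB s = u ∧ germAlong F B s = v) :=
  ⟨sectionToDelGerms_restrictAwayFrom hB, injective_restrictAwayFrom_prod_germAlong hB hsheaf,
    exists_restrictAwayFrom_eq_germAlong_eq hB hsheaf⟩
end
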